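/- arXiv:2204.01198 — 2 statements merged into one kernel-verified Lean document; each statement's English description precedes it below -/
import Mathlib

section
/- With F, Σ_h, σ², Σ, A₁, B₁, B₂ as above (Σ_h Hermitian positive semidefinite, σ² > 0), define D₁ = A₁^{1/2} Σ_h A₁^{1/2} + σ² I_M and D₂ = σ² I_M. Then Σ = B₁ D₁ B₁^H + B₂ D₂ B₂^H. -/
/-! The block columns `[I; F]` and `[-Fᴴ; I]` of the square matrix `[[I, -Fᴴ], [F, I]]` are
orthogonal, with Gram matrices `A₁` and `A₂`. Hence
`[I; F] A₁⁻¹ [I; F]ᴴ + [-Fᴴ; I] A₂⁻¹ [-Fᴴ; I]ᴴ = I`, since a one-sided inverse of a square matrix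
is two-sided. As `A₁^{1/2}` is Hermitian with square `A₁`, the whitening by `A₁^{-1/2}` cancels
in `B₁ D₁ B₁ᴴ`, leaving `[I; F] Σ_h [I; F]ᴴ + σ² [I; F] A₁⁻¹ [I; F]ᴴ`; likewise
`B₂ D₂ B₂ᴴ = σ² [-Fᴴ; I] A₂⁻¹ [-Fᴴ; I]ᴴ`, and the identity above sums the `σ²` terms to `σ² I`. -/

open Matrix
open scoped ComplexOrder

/-- The block column matrix `[I_M; F] ∈ ℂ^{2M×M}`. -/
def stackIdF {M : ℕ} (F : Matrix (Fin M) (Fin M) ℂ) :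
    Matrix (Fin M ⊕ Fin M) (Fin M) ℂ :=
  Matrix.of (Sum.elim (fun i j => (1 : Matrix (Fin M) (Fin M) ℂ) i j) (fun i j => F i j))

/-- The block column matrix `[-Fᴴ; I_M] ∈ ℂ^{2M×M}`. -/
def stackNegFH {M : ℕ} (F : Matrix (Fin M) (Fin M) ℂ) :
    Matrix (Fin M ⊕ Fin M) (Fin M) ℂ :=
  Matrix.of (Sum.elim (fun i j => (-Fᴴ) i j) (fun i j => (1 : Matrix (Fin M) (Fin M) ℂ) i j))

noncomputable def Matrix.PosSemidef.sqrt {n 𝕜 : Type*} [Fintype n] [RCLike 𝕜] [DecidableEq n]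
    {A : Matrix n n 𝕜} (hA : A.PosSemidef) : Matrix n n 𝕜 :=
  (hA.1.eigenvectorUnitary : Matrix n n 𝕜) *
    diagonal (fun i => ((Real.sqrt (hA.1.eigenvalues i) : ℝ) : 𝕜)) *
    (star hA.1.eigenvectorUnitary : Matrix n n 𝕜)

namespace Matrix.PosSemidef

variable {m n 𝕜 : Type*} [Fintype n] [RCLike 𝕜] [DecidableEq n] {A : Matrix n n 𝕜}
  (hA : A.PosSemidef)

theorem sqrt_mul_self : hA.sqrt * hA.sqrt = A := by
  set U : Matrix n n 𝕜 := (hA.1.eigenvectorUnitary : Matrix n n 𝕜)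
  set D : Matrix n n 𝕜 := diagonal fun i => ((Real.sqrt (hA.1.eigenvalues i) : ℝ) : 𝕜)
  have hU : star U * U = 1 := Unitary.coe_star_mul_self _
  have hD : D * D = diagonal (RCLike.ofReal ∘ hA.1.eigenvalues) := by
    rw [diagonal_mul_diagonal]
    congr 1; funext i
    simp only [Function.comp_apply, ← RCLike.ofReal_mul,
      Real.mul_self_sqrt (hA.eigenvalues_nonneg i)]
  have hs := hA.1.spectral_theorem
  rw [Unitary.conjStarAlgAut_apply] at hs
  calc hA.sqrt * hA.sqrt = U * D * (star U * U) * D * star U := by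
        simp only [sqrt, U, D, Matrix.mul_assoc]
    _ = A := by rw [hU, Matrix.mul_one, Matrix.mul_assoc U D D, hD]; exact hs.symm

theorem posSemidef_sqrt : hA.sqrt.PosSemidef := by
  have hD : (diagonal fun i => ((Real.sqrt (hA.1.eigenvalues i) : ℝ) : 𝕜)).PosSemidef :=
    posSemidef_diagonal_iff.2 fun i => by simp
  simpa only [sqrt, star_eq_conjTranspose] using
    hD.mul_mul_conjTranspose_same (hA.1.eigenvectorUnitary : Matrix n n 𝕜)

theorem isUnit_det_sqrt (h : IsUnit A.det) : IsUnit hA.sqrt.det :=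
  isUnit_of_mul_isUnit_left (by rwa [← det_mul, hA.sqrt_mul_self])

theorem sqrt_inv_mul_sqrt_inv : hA.sqrt⁻¹ * hA.sqrt⁻¹ = A⁻¹ := by
  rw [← mul_inv_rev, hA.sqrt_mul_self]

theorem conjTranspose_mul_sqrt_inv (B : Matrix m n 𝕜) : (B * hA.sqrt⁻¹)ᴴ = hA.sqrt⁻¹ * Bᴴ := by
  rw [conjTranspose_mul, conjTranspose_nonsing_inv, hA.posSemidef_sqrt.isHermitian.eq]

theorem mul_sqrt_inv_conj_sqrt_mul_mul_sqrt (h : IsUnit A.det) (B : Matrix m n 𝕜)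
    (C : Matrix n n 𝕜) :
    B * hA.sqrt⁻¹ * (hA.sqrt * C * hA.sqrt) * (B * hA.sqrt⁻¹)ᴴ = B * C * Bᴴ := by
  have hS := hA.isUnit_det_sqrt h
  calc _ = B * (hA.sqrt⁻¹ * hA.sqrt) * C * (hA.sqrt * hA.sqrt⁻¹) * Bᴴ := by
        simp only [hA.conjTranspose_mul_sqrt_inv, Matrix.mul_assoc]
    _ = B * C * Bᴴ := by
        rw [nonsing_inv_mul _ hS, mul_nonsing_inv _ hS, Matrix.mul_one, Matrix.mul_one]

theorem mul_sqrt_inv_conj_smul_one (B : Matrix m n 𝕜) (c : 𝕜) :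
    B * hA.sqrt⁻¹ * (c • (1 : Matrix n n 𝕜)) * (B * hA.sqrt⁻¹)ᴴ = c • (B * A⁻¹ * Bᴴ) := by
  rw [hA.conjTranspose_mul_sqrt_inv, ← hA.sqrt_inv_mul_sqrt_inv, Matrix.mul_smul, Matrix.mul_one,
    Matrix.smul_mul]
  simp only [Matrix.mul_assoc]

end Matrix.PosSemidef

namespace Matrix

section Resolution

variable {m n R : Type*} [Fintype m] [Fintype n] [DecidableEq m] [DecidableEq n]
  [CommRing R] [StarRing R]

theorem mul_inv_gram_mul_conjTranspose_add_eq_one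
    {X : Matrix (n ⊕ m) n R} {Y : Matrix (n ⊕ m) m R}
    (hX : IsUnit (Xᴴ * X).det) (hY : IsUnit (Yᴴ * Y).det) (hXY : Xᴴ * Y = 0) :
    X * (Xᴴ * X)⁻¹ * Xᴴ + Y * (Yᴴ * Y)⁻¹ * Yᴴ = 1 := by
  have hYX : Yᴴ * X = 0 := by
    rw [← conjTranspose_conjTranspose X, ← conjTranspose_mul, hXY, conjTranspose_zero]
  rw [← fromCols_mul_fromRows, fromCols_mul_fromRows_eq_one_comm (Equiv.refl _),
    fromRows_mul_fromCols, ← fromBlocks_one]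
  simp only [← Matrix.mul_assoc, hXY, hYX, Matrix.zero_mul, mul_nonsing_inv _ hX,
    mul_nonsing_inv _ hY]

theorem fromRows_one_mul_inv_mul_conjTranspose_add_eq_one
    (F : Matrix m n R) (h₁ : IsUnit (Fᴴ * F + 1).det) (h₂ : IsUnit (F * Fᴴ + 1).det) :
    fromRows (1 : Matrix n n R) F * (Fᴴ * F + 1)⁻¹ * (fromRows (1 : Matrix n n R) F)ᴴ
      + fromRows (-Fᴴ) (1 : Matrix m m R) * (F * Fᴴ + 1)⁻¹ * (fromRows (-Fᴴ) (1 : Matrix m m R))ᴴ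
      = 1 := by
  have gram₁ : (fromRows (1 : Matrix n n R) F)ᴴ * fromRows (1 : Matrix n n R) F = Fᴴ * F + 1 := by
    rw [conjTranspose_fromRows_eq_fromCols_conjTranspose, fromCols_mul_fromRows]
    simp [add_comm]
  have gram₂ : (fromRows (-Fᴴ) (1 : Matrix m m R))ᴴ * fromRows (-Fᴴ) (1 : Matrix m m R)
      = F * Fᴴ + 1 := by
    rw [conjTranspose_fromRows_eq_fromCols_conjTranspose, fromCols_mul_fromRows]
    simp
  have orth : (fromRows (1 : Matrix n n R) F)ᴴ * fromRows (-Fᴴ) (1 : Matrix m m R) = 0 := by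
    rw [conjTranspose_fromRows_eq_fromCols_conjTranspose, fromCols_mul_fromRows]
    simp
  have := mul_inv_gram_mul_conjTranspose_add_eq_one
    (gram₁ ▸ h₁) (gram₂ ▸ h₂) orth
  rwa [gram₁, gram₂] at this

end Resolution

theorem isUnit_det_conjTranspose_mul_self_add_one {m n 𝕜 : Type*} [Fintype m] [Fintype n]
    [DecidableEq n] [RCLike 𝕜] (F : Matrix m n 𝕜) : IsUnit (Fᴴ * F + 1).det :=
  (isUnit_iff_isUnit_det _).1
    (PosDef.posSemidef_add (posSemidef_conjTranspose_mul_self F) PosDef.one).isUnit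

end Matrix

theorem block_eigendecomposition_general {M : ℕ} (F Sh : Matrix (Fin M) (Fin M) ℂ)
    (σ2 : ℝ)
    (hA1 : (Fᴴ * F + 1).PosSemidef) (hA2 : (F * Fᴴ + 1).PosSemidef) :
    stackIdF F * Sh * (stackIdF F)ᴴ + (σ2 : ℂ) • 1
      = (stackIdF F * hA1.sqrt⁻¹) * (hA1.sqrt * Sh * hA1.sqrt + (σ2 : ℂ) • (1 : Matrix (Fin M) (Fin M) ℂ)) *
          (stackIdF F * hA1.sqrt⁻¹)ᴴ
        + (stackNegFH F * hA2.sqrt⁻¹) * ((σ2 : ℂ) • (1 : Matrix (Fin M) (Fin M) ℂ)) * (stackNegFH F * hA2.sqrt⁻¹)ᴴ := by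
  have h₁ : IsUnit (Fᴴ * F + 1).det := isUnit_det_conjTranspose_mul_self_add_one F
  have h₂ : IsUnit (F * Fᴴ + 1).det := by
    simpa using isUnit_det_conjTranspose_mul_self_add_one Fᴴ
  rw [Matrix.mul_add, Matrix.add_mul, hA1.mul_sqrt_inv_conj_sqrt_mul_mul_sqrt h₁,
    hA1.mul_sqrt_inv_conj_smul_one, hA2.mul_sqrt_inv_conj_smul_one, add_assoc, ← smul_add]
  congr 2
  exact (fromRows_one_mul_inv_mul_conjTranspose_add_eq_one F h₁ h₂).symm

/-- With `Σ = [I;F] Σ_h [I Fᴴ] + σ² I`, `D₁ = A₁^{1/2} Σ_h A₁^{1/2} + σ² I`, `D₂ = σ² I`,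
`B₁ = [I;F] A₁^{-1/2}`, `B₂ = [-Fᴴ;I] A₂^{-1/2}`, one has `Σ = B₁ D₁ B₁ᴴ + B₂ D₂ B₂ᴴ`. -/
theorem block_eigendecomposition {M : ℕ} (F Sh : Matrix (Fin M) (Fin M) ℂ)
    (hSh : Sh.PosSemidef) (σ2 : ℝ) (hσ : 0 < σ2)
    (hA1 : (Fᴴ * F + 1).PosSemidef) (hA2 : (F * Fᴴ + 1).PosSemidef) :
    stackIdF F * Sh * (stackIdF F)ᴴ + (σ2 : ℂ) • 1
      = (stackIdF F * hA1.sqrt⁻¹) * (hA1.sqrt * Sh * hA1.sqrt + (σ2 : ℂ) • (1 : Matrix (Fin M) (Fin M) ℂ)) *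
          (stackIdF F * hA1.sqrt⁻¹)ᴴ
        + (stackNegFH F * hA2.sqrt⁻¹) * ((σ2 : ℂ) • (1 : Matrix (Fin M) (Fin M) ℂ)) * (stackNegFH F * hA2.sqrt⁻¹)ᴴ :=
  block_eigendecomposition_general F Sh σ2 hA1 hA2
end

section
/- Let Σ ∈ ℂ^{2M×2M} be the matrix Σ = [I_M; F] Σ_h [I_M F^H] + σ² I_{2M} with F ∈ ℂ^{M×M}, Σ_h Hermitian positive semidefinite, σ² > 0. Then Σ has exactly M eigenvalues equal to σ² (counted with multiplicity) if Σ_h and A₁ = F^H F + I_M are such that A₁^{1/2} Σ_h A₁^{1/2} is positive definite, and all remaining M eigenvalues are strictly greater than σ². -/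
open Matrix
open scoped ComplexOrder

/-! Writing `B = [I; F]`, the matrix `Σ - σ² I = B Σ_h Bᴴ` is positive semidefinite, so every
eigenvalue of `Σ` is at least `σ²`, and the number of eigenvalues different from `σ²` is
`rank (B Σ_h Bᴴ)`. The hypothesis forces `Σ_h` to be invertible, hence positive definite, so
this rank equals `rank B = rank (Bᴴ B) = rank (Fᴴ F + I) = M`. -/

namespace Matrix

variable {m n 𝕜 : Type*} [Fintype n] [DecidableEq n] [RCLike 𝕜]

open Unitary in
theorem IsHermitian.sub_smul_one_eq_conj {S : Matrix n n 𝕜} (hS : S.IsHermitian) (c : ℝ) :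
    S - (c : 𝕜) • 1 = conjStarAlgAut 𝕜 _ hS.eigenvectorUnitary
      (diagonal fun i => ((hS.eigenvalues i - c : ℝ) : 𝕜)) := by
  have hdiag : (diagonal fun i => ((hS.eigenvalues i - c : ℝ) : 𝕜)) =
      diagonal (RCLike.ofReal ∘ hS.eigenvalues) - (c : 𝕜) • 1 := by
    rw [smul_one_eq_diagonal, diagonal_sub]
    simp
  rw [hdiag, map_sub, ← hS.spectral_theorem, map_smul, map_one]

theorem IsHermitian.rank_sub_smul_one {S : Matrix n n 𝕜} (hS : S.IsHermitian) (c : ℝ) :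
    (S - (c : 𝕜) • 1).rank = Fintype.card {i // hS.eigenvalues i ≠ c} := by
  rw [hS.sub_smul_one_eq_conj, Unitary.conjStarAlgAut_apply, ← Unitary.coe_star]
  simp [-isUnit_iff_ne_zero, -Unitary.coe_star, rank_diagonal, sub_eq_zero]

theorem IsHermitian.card_eigenvalues_eq_add_rank_sub_smul_one {S : Matrix n n 𝕜}
    (hS : S.IsHermitian) (c : ℝ) :
    (Finset.univ.filter fun i => hS.eigenvalues i = c).card + (S - (c : 𝕜) • 1).rank =
      Fintype.card n := by
  rw [hS.rank_sub_smul_one, Fintype.card_subtype, Finset.card_filter_add_card_filter_not,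
    Finset.card_univ]

open scoped MatrixOrder in
theorem IsHermitian.le_eigenvalues_of_posSemidef_sub_smul_one {S : Matrix n n 𝕜}
    (hS : S.IsHermitian) {c : ℝ} (h : (S - (c : 𝕜) • 1).PosSemidef) (i : n) :
    c ≤ hS.eigenvalues i := by
  have hcS : algebraMap ℝ (Matrix n n 𝕜) c ≤ S := by
    rwa [le_iff, Algebra.algebraMap_eq_smul_one, RCLike.real_smul_eq_coe_smul (K := 𝕜)]
  exact (algebraMap_le_iff_le_spectrum (p := IsSelfAdjoint) hS).mp hcS _
    (hS.eigenvalues_mem_spectrum_real i)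

theorem PosSemidef.posDef_of_posDef_mul_mul {A : Matrix n n 𝕜} (hA : A.PosSemidef)
    {R T : Matrix n n 𝕜} (h : (R * A * T).PosDef) : A.PosDef := by
  rw [hA.posDef_iff_det_ne_zero]
  intro hdet
  simpa [det_mul, hdet] using h.det_pos.ne'

open scoped MatrixOrder in
theorem PosDef.rank_mul_mul_conjTranspose [Fintype m] {A : Matrix n n 𝕜} (hA : A.PosDef)
    (B : Matrix m n 𝕜) : (B * A * Bᴴ).rank = B.rank := by
  obtain ⟨C, hC, rfl⟩ :=
    CStarAlgebra.isStrictlyPositive_iff_eq_star_mul_self.mp hA.isStrictlyPositive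
  have hfactor : B * (star C * C) * Bᴴ = (B * star C) * (B * star C)ᴴ := by
    rw [conjTranspose_mul, star_eq_conjTranspose, conjTranspose_conjTranspose]
    simp only [Matrix.mul_assoc]
  rw [hfactor, rank_self_mul_conjTranspose,
    rank_mul_eq_left_of_isUnit_det _ _ ((isUnit_iff_isUnit_det _).mp hC.star)]

end Matrix

theorem conjTranspose_stackIdF_mul_self {M : ℕ} (F : Matrix (Fin M) (Fin M) ℂ) :
    (stackIdF F)ᴴ * stackIdF F = Fᴴ * F + 1 := by
  change (fromRows 1 F)ᴴ * fromRows 1 F = _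
  rw [conjTranspose_fromRows_eq_fromCols_conjTranspose, fromCols_mul_fromRows,
    conjTranspose_one, one_mul, add_comm]

theorem rank_stackIdF {M : ℕ} (F : Matrix (Fin M) (Fin M) ℂ) : (stackIdF F).rank = M := by
  have hA1 : (Fᴴ * F + 1).PosDef :=
    PosDef.posSemidef_add (posSemidef_conjTranspose_mul_self F) PosDef.one
  rw [← rank_conjTranspose_mul_self, conjTranspose_stackIdF_mul_self,
    rank_of_isUnit _ hA1.isUnit, Fintype.card_fin]

theorem exactly_M_eigenvalues_equal_sigma_sq_general {M : ℕ} (F Sh : Matrix (Fin M) (Fin M) ℂ)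
    (hSh : Sh.PosSemidef) (σ2 : ℝ)
    (hA1 : (Fᴴ * F + 1).PosSemidef)
    (hpd : ((hA1.1.eigenvectorUnitary.1 * diagonal ((fun x : ℝ => (x : ℂ)) ∘ (Real.sqrt ·) ∘ hA1.1.eigenvalues) *
        (star hA1.1.eigenvectorUnitary : Matrix (Fin M) (Fin M) ℂ)) * Sh *
      (hA1.1.eigenvectorUnitary.1 * diagonal ((fun x : ℝ => (x : ℂ)) ∘ (Real.sqrt ·) ∘ hA1.1.eigenvalues) *
        (star hA1.1.eigenvectorUnitary : Matrix (Fin M) (Fin M) ℂ))).PosDef) :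
    ∃ hS : (stackIdF F * Sh * (stackIdF F)ᴴ
        + (σ2 : ℂ) • (1 : Matrix (Fin M ⊕ Fin M) (Fin M ⊕ Fin M) ℂ)).IsHermitian,
      (Finset.univ.filter (fun i => hS.eigenvalues i = σ2)).card = M ∧
      ∀ i, hS.eigenvalues i = σ2 ∨ σ2 < hS.eigenvalues i := by
  have hP : (stackIdF F * Sh * (stackIdF F)ᴴ).PosSemidef := hSh.mul_mul_conjTranspose_same _
  have hS : (stackIdF F * Sh * (stackIdF F)ᴴ
      + (σ2 : ℂ) • (1 : Matrix (Fin M ⊕ Fin M) (Fin M ⊕ Fin M) ℂ)).IsHermitian :=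
    hP.isHermitian.add (isHermitian_one.smul (Complex.conj_ofReal σ2))
  have hrank : (stackIdF F * Sh * (stackIdF F)ᴴ).rank = M := by
    rw [(hSh.posDef_of_posDef_mul_mul hpd).rank_mul_mul_conjTranspose, rank_stackIdF]
  have hcount := hS.card_eigenvalues_eq_add_rank_sub_smul_one σ2
  have hge := hS.le_eigenvalues_of_posSemidef_sub_smul_one (c := σ2)
  -- the general lemmas coerce `σ2` through `RCLike.ofReal`, the statement through `Complex.ofReal`
  simp only [RCLike.ofReal_eq_complex_ofReal, add_sub_cancel_right] at hcount hge
  rw [hrank, Fintype.card_sum, Fintype.card_fin] at hcount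
  exact ⟨hS, by omega, fun i => (hge hP i).eq_or_lt.imp Eq.symm id⟩

/-- If `A₁^{1/2} Σ_h A₁^{1/2}` is positive definite (`A₁ = Fᴴ F + I`), then
`Σ = [I;F] Σ_h [I Fᴴ] + σ² I_{2M}` has exactly `M` eigenvalues equal to `σ²` (with
multiplicity) and the remaining `M` eigenvalues strictly greater than `σ²`. -/
theorem exactly_M_eigenvalues_equal_sigma_sq {M : ℕ} (F Sh : Matrix (Fin M) (Fin M) ℂ)
    (hSh : Sh.PosSemidef) (σ2 : ℝ) (hσ : 0 < σ2)
    (hA1 : (Fᴴ * F + 1).PosSemidef)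
    (hpd : ((hA1.1.eigenvectorUnitary.1 * diagonal ((fun x : ℝ => (x : ℂ)) ∘ (Real.sqrt ·) ∘ hA1.1.eigenvalues) *
        (star hA1.1.eigenvectorUnitary : Matrix (Fin M) (Fin M) ℂ)) * Sh *
      (hA1.1.eigenvectorUnitary.1 * diagonal ((fun x : ℝ => (x : ℂ)) ∘ (Real.sqrt ·) ∘ hA1.1.eigenvalues) *
        (star hA1.1.eigenvectorUnitary : Matrix (Fin M) (Fin M) ℂ))).PosDef) :
    ∃ hS : (stackIdF F * Sh * (stackIdF F)ᴴ
        + (σ2 : ℂ) • (1 : Matrix (Fin M ⊕ Fin M) (Fin M ⊕ Fin M) ℂ)).IsHermitian,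
      (Finset.univ.filter (fun i => hS.eigenvalues i = σ2)).card = M ∧
      ∀ i, hS.eigenvalues i = σ2 ∨ σ2 < hS.eigenvalues i :=
  exactly_M_eigenvalues_equal_sigma_sq_general F Sh hSh σ2 hA1 hpd
end
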